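/- For α ∈ (0,1) and z ∈ ℂ \ (−∞,0]: ∫₀^∞ y^{α−1} log y/(y+z) dy = (π/sin(απ)) z^{α−1} (log z − π cot(απ)) using principal branches. -/

import Mathlib

/-!
The integral is the `s`-derivative at `s = α` of the Mellin transform
`∫₀^∞ t^(s-1) / (t + z) dt = π / sin (π s) · z^(s-1)`, valid for `0 < Re s < 1`.
For `z = 1` this is the Beta integral `B(s, 1 - s) = Γ(s) Γ(1 - s)` after the substitution
`t = x / (1 - x)`; the scaling `t ↦ x t` gives it for `z = x > 0`, and it extends to the slit
plane because both sides are holomorphic in `z`. Differentiating the right-hand side in `s`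
produces the factor `log z - π cot (π α)`.
-/

open MeasureTheory Set Complex Filter Asymptotics Metric
open scoped Real Topology

lemma ofReal_add_ne_zero_of_mem_slitPlane {z : ℂ} (hz : z ∈ slitPlane) {t : ℝ} (ht : 0 ≤ t) :
    (t : ℂ) + z ≠ 0 := fun h =>
  (neg_ofReal_mem_slitPlane.1 (eq_neg_of_add_eq_zero_right h ▸ hz)).not_ge ht

lemma exists_pos_le_norm_ofReal_add {z : ℂ} (hz : z ∈ slitPlane) :
    ∃ m > 0, ∀ t : ℝ, 0 ≤ t → m ≤ ‖(t : ℂ) + z‖ := by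
  refine ⟨infDist z slitPlaneᶜ, ?_, fun t ht => ?_⟩
  · exact (isOpen_slitPlane.isClosed_compl.notMem_iff_infDist_pos
      ⟨0, zero_notMem_slitPlane⟩).1 (not_not.2 hz)
  · have ht' : -(t : ℂ) ∈ slitPlaneᶜ := fun h => (neg_ofReal_mem_slitPlane.1 h).not_ge ht
    simpa [dist_eq, add_comm] using infDist_le_dist_of_mem ht'

lemma exists_pos_mul_one_add_le_norm_ofReal_add {z : ℂ} (hz : z ∈ slitPlane) :
    ∃ c > 0, ∀ t : ℝ, 0 ≤ t → c * (1 + t) ≤ ‖(t : ℂ) + z‖ := by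
  obtain ⟨m, hm, hmz⟩ := exists_pos_le_norm_ofReal_add hz
  refine ⟨min (1 / 2) (m / (2 * (‖z‖ + 1))), by positivity, fun t ht => ?_⟩
  have h_far : t - ‖z‖ ≤ ‖(t : ℂ) + z‖ := by
    simpa [abs_of_nonneg ht] using norm_sub_norm_le (t : ℂ) (-z)
  rcases le_total t (2 * ‖z‖ + 1) with h | h
  · calc min (1 / 2) (m / (2 * (‖z‖ + 1))) * (1 + t)
        ≤ m / (2 * (‖z‖ + 1)) * (2 * (‖z‖ + 1)) := by
          gcongr
          · exact min_le_right _ _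
          · linarith
      _ = m := by field_simp
      _ ≤ ‖(t : ℂ) + z‖ := hmz t ht
  · calc min (1 / 2) (m / (2 * (‖z‖ + 1))) * (1 + t) ≤ 1 / 2 * (1 + t) := by
          gcongr; exact min_le_left _ _
      _ ≤ ‖(t : ℂ) + z‖ := by linarith

lemma exists_ball_pos_mul_one_add_le_norm_ofReal_add {z : ℂ} (hz : z ∈ slitPlane) :
    ∃ ε > 0, ∃ c > 0, ∀ w ∈ ball z ε, ∀ t : ℝ, 0 ≤ t → c * (1 + t) ≤ ‖(t : ℂ) + w‖ := by
  obtain ⟨c, hc, hcz⟩ := exists_pos_mul_one_add_le_norm_ofReal_add hz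
  refine ⟨c / 2, by positivity, c / 2, by positivity, fun w hw t ht => ?_⟩
  have hzw : ‖(t : ℂ) + z‖ ≤ ‖(t : ℂ) + w‖ + c / 2 := by
    calc ‖(t : ℂ) + z‖ = ‖((t : ℂ) + w) + (z - w)‖ := by ring_nf
      _ ≤ ‖(t : ℂ) + w‖ + ‖z - w‖ := norm_add_le _ _
      _ ≤ ‖(t : ℂ) + w‖ + c / 2 := by
          rw [← dist_eq, dist_comm]; exact add_le_add_right (mem_ball.1 hw).le _
  nlinarith [hcz t ht, mul_nonneg hc.le ht]

lemma norm_inv_le_inv_mul_inv {𝕜 : Type*} [NormedDivisionRing 𝕜] {u : 𝕜} {c x : ℝ}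
    (hc : 0 < c) (hx : 0 < x) (h : c * x ≤ ‖u‖) : ‖u⁻¹‖ ≤ c⁻¹ * x⁻¹ := by
  rw [norm_inv, ← mul_inv]; exact inv_anti₀ (by positivity) h

lemma isBigO_ofReal_add_inv_atTop {z : ℂ} (hz : z ∈ slitPlane) :
    (fun t : ℝ => ((t : ℂ) + z)⁻¹) =O[atTop] (· ^ (-1 : ℝ)) := by
  obtain ⟨c, hc, hcz⟩ := exists_pos_mul_one_add_le_norm_ofReal_add hz
  refine IsBigO.of_bound c⁻¹ ?_
  filter_upwards [eventually_gt_atTop 0] with t ht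
  rw [Real.rpow_neg_one, Real.norm_of_nonneg (by positivity)]
  calc ‖((t : ℂ) + z)⁻¹‖ ≤ c⁻¹ * (1 + t)⁻¹ :=
        norm_inv_le_inv_mul_inv hc (by positivity) (hcz t ht.le)
    _ ≤ c⁻¹ * t⁻¹ := by gcongr; linarith

-- The exponent `-0` matches the shape `(· ^ (-b))` expected by `mellin_hasDerivAt_of_isBigO_rpow`.
lemma isBigO_ofReal_add_inv_nhdsGT_zero {z : ℂ} (hz : z ∈ slitPlane) :
    (fun t : ℝ => ((t : ℂ) + z)⁻¹) =O[𝓝[>] 0] (· ^ (-0 : ℝ)) := by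
  obtain ⟨c, hc, hcz⟩ := exists_pos_mul_one_add_le_norm_ofReal_add hz
  refine IsBigO.of_bound c⁻¹ ?_
  filter_upwards [self_mem_nhdsWithin] with t (ht : 0 < t)
  rw [neg_zero, Real.rpow_zero, norm_one, mul_one]
  calc ‖((t : ℂ) + z)⁻¹‖ ≤ c⁻¹ * (1 + t)⁻¹ :=
        norm_inv_le_inv_mul_inv hc (by positivity) (hcz t ht.le)
    _ ≤ c⁻¹ := mul_le_of_le_one_right (by positivity) (inv_le_one_of_one_le₀ (by linarith))

lemma locallyIntegrableOn_ofReal_add_inv {z : ℂ} (hz : z ∈ slitPlane) :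
    LocallyIntegrableOn (fun t : ℝ => ((t : ℂ) + z)⁻¹) (Ioi 0) :=
  ((continuous_ofReal.add continuous_const).continuousOn.inv₀ fun _ ht =>
    ofReal_add_ne_zero_of_mem_slitPlane hz (le_of_lt ht)).locallyIntegrableOn measurableSet_Ioi

lemma mellinConvergent_ofReal_add_inv {z : ℂ} (hz : z ∈ slitPlane) {s : ℂ} (hs0 : 0 < s.re)
    (hs1 : s.re < 1) : MellinConvergent (fun t : ℝ => ((t : ℂ) + z)⁻¹) s :=
  mellinConvergent_of_isBigO_rpow (locallyIntegrableOn_ofReal_add_inv hz)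
    (isBigO_ofReal_add_inv_atTop hz) hs1 (isBigO_ofReal_add_inv_nhdsGT_zero hz) hs0

lemma image_div_one_sub_Ioo : (fun x : ℝ => x / (1 - x)) '' Ioo 0 1 = Ioi 0 := by
  ext t
  constructor
  · rintro ⟨x, ⟨hx0, hx1⟩, rfl⟩
    exact div_pos hx0 (sub_pos.2 hx1)
  · intro (ht : 0 < t)
    refine ⟨t / (1 + t), ⟨by positivity, (div_lt_one (by positivity)).2 (by linarith)⟩, ?_⟩
    field_simp
    ring

lemma betaIntegral_eq_integral_Ioi (u v : ℂ) :
    betaIntegral u v = ∫ t in Ioi (0 : ℝ), (t : ℂ) ^ (u - 1) * (1 + (t : ℂ)) ^ (-(u + v)) := by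
  have hderiv : ∀ x ∈ Ioo (0 : ℝ) 1,
      HasDerivWithinAt (fun x : ℝ => x / (1 - x)) ((1 - x) ^ 2)⁻¹ (Ioo 0 1) x := by
    intro x hx
    have h1x : 1 - x ≠ 0 := (sub_pos.2 hx.2).ne'
    exact ((hasDerivAt_id' x).div ((hasDerivAt_id' x).const_sub 1) h1x
      ).hasDerivWithinAt.congr_deriv (by ring)
  have hinj : InjOn (fun x : ℝ => x / (1 - x)) (Ioo 0 1) := by
    intro a ha b hb hab
    rw [div_eq_div_iff (sub_pos.2 ha.2).ne' (sub_pos.2 hb.2).ne'] at hab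
    linarith
  rw [← image_div_one_sub_Ioo, integral_image_eq_integral_abs_deriv_smul measurableSet_Ioo hderiv
    hinj, betaIntegral, intervalIntegral.integral_of_le zero_le_one, integral_Ioc_eq_integral_Ioo]
  refine setIntegral_congr_fun measurableSet_Ioo fun x ⟨hx0, hx1⟩ => ?_
  have h1x : 0 < 1 - x := sub_pos.2 hx1
  obtain ⟨W, hW_def⟩ : ∃ W : ℂ, W = ((1 - x : ℝ) : ℂ) := ⟨_, rfl⟩
  have hW_ne : W ≠ 0 := hW_def ▸ ofReal_ne_zero.2 h1x.ne'
  have h_sub : 1 - (x : ℂ) = W := by rw [hW_def]; push_cast; ring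
  have h_add : 1 + ((x / (1 - x) : ℝ) : ℂ) = W⁻¹ := by
    rw [hW_def, ← ofReal_one, ← ofReal_add, ← ofReal_inv]; congr 1; field_simp; ring
  have h_sq : ((((1 - x) ^ 2)⁻¹ : ℝ) : ℂ) = (W ^ 2)⁻¹ := by rw [hW_def]; norm_cast
  have h_pow : W ^ (u + v) = W ^ (u - 1) * W ^ (v - 1) * W ^ 2 := by
    rw [← cpow_add _ _ hW_ne, ← cpow_natCast, ← cpow_add _ _ hW_ne]
    congr 1; push_cast; ring
  rw [abs_of_pos (by positivity), real_smul, h_add, hW_def, inv_cpow_ofReal_nonneg h1x.le, cpow_neg,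
    inv_inv, ofReal_div, div_cpow_ofReal_nonneg hx0.le h1x.le, ← hW_def, h_pow, h_sq, h_sub]
  have : W ^ (u - 1) ≠ 0 := cpow_ne_zero_iff.2 (Or.inl hW_ne)
  field_simp

lemma mellin_ofReal_add_one_inv {s : ℂ} (hs0 : 0 < s.re) (hs1 : s.re < 1) :
    mellin (fun t : ℝ => ((t : ℂ) + 1)⁻¹) s = π / sin (π * s) := by
  have hB := Gamma_mul_Gamma_eq_betaIntegral hs0 (by simpa using hs1 : 0 < (1 - s).re)
  rw [add_sub_cancel, Gamma_one, one_mul, Gamma_mul_Gamma_one_sub] at hB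
  rw [hB, betaIntegral_eq_integral_Ioi, add_sub_cancel, mellin]
  simp only [smul_eq_mul, cpow_neg_one, add_comm (1 : ℂ)]

lemma mellin_ofReal_add_inv_of_pos {x : ℝ} (hx : 0 < x) (s : ℂ) :
    mellin (fun t : ℝ => ((t : ℂ) + x)⁻¹) s =
      (x : ℂ) ^ (s - 1) * mellin (fun t : ℝ => ((t : ℂ) + 1)⁻¹) s := by
  have hx' : (x : ℂ) ≠ 0 := ofReal_ne_zero.2 hx.ne'
  have h_scale : (fun t : ℝ => ((t : ℂ) + x)⁻¹) =
      fun t : ℝ => (((x⁻¹ * t : ℝ) : ℂ) + 1)⁻¹ / x := by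
    ext t; push_cast; field_simp
  have h_comp := mellin_comp_mul_left (fun u : ℝ => ((u : ℂ) + 1)⁻¹) s (inv_pos.2 hx)
  beta_reduce at h_comp
  rw [h_scale, mellin_div_const, h_comp, smul_eq_mul, ofReal_inv,
    inv_cpow_ofReal_nonneg hx.le, cpow_neg, inv_inv, cpow_sub _ _ hx', cpow_one]
  ring

lemma inv_sq_le_of_mul_one_add_le {c t u : ℝ} (hc : 0 < c) (ht : 0 ≤ t) (h : c * (1 + t) ≤ u) :
    (u ^ 2)⁻¹ ≤ c⁻¹ ^ 2 * (1 + t)⁻¹ := by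
  have hc_le : c ≤ u := le_trans (le_mul_of_one_le_right hc.le (by linarith)) h
  rw [inv_pow, ← mul_inv]
  exact inv_anti₀ (by positivity) (by nlinarith)

lemma differentiableOn_mellin_ofReal_add_inv {s : ℂ} (hs0 : 0 < s.re) (hs1 : s.re < 1) :
    DifferentiableOn ℂ (fun z => mellin (fun t : ℝ => ((t : ℂ) + z)⁻¹) s) slitPlane := by
  intro z hz
  obtain ⟨ε, hε, c, hc, hcw⟩ := exists_ball_pos_mul_one_add_le_norm_ofReal_add hz
  have hne : ∀ w ∈ ball z ε, ∀ t : ℝ, 0 ≤ t → (t : ℂ) + w ≠ 0 := fun w hw t ht h =>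
    (mul_pos hc (by linarith : (0 : ℝ) < 1 + t)).not_ge (by simpa [h] using hcw w hw t ht)
  have h_meas : ∀ᶠ w in 𝓝 z, AEStronglyMeasurable
      (fun t : ℝ => (t : ℂ) ^ (s - 1) • ((t : ℂ) + w)⁻¹) (volume.restrict (Ioi 0)) :=
    Filter.mem_of_superset (isOpen_slitPlane.mem_nhds hz) fun w hw =>
      (mellinConvergent_ofReal_add_inv hw hs0 hs1).aestronglyMeasurable
  have h_meas' : AEStronglyMeasurable
      (fun t : ℝ => (t : ℂ) ^ (s - 1) • (-1 / ((t : ℂ) + z) ^ 2)) (volume.restrict (Ioi 0)) := by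
    refine ContinuousOn.aestronglyMeasurable (fun t (ht : 0 < t) => ?_) measurableSet_Ioi
    refine ((continuousAt_ofReal_cpow_const _ _ (Or.inr ht.ne')).smul
      (continuousAt_const.div ((continuous_ofReal.add continuous_const).pow 2).continuousAt
        (pow_ne_zero 2 (hne z (mem_ball_self hε) t ht.le)))).continuousWithinAt
  have h_bound : ∀ᵐ t : ℝ ∂(volume.restrict (Ioi (0 : ℝ))), ∀ w ∈ ball z ε,
      ‖(t : ℂ) ^ (s - 1) • (-1 / ((t : ℂ) + w) ^ 2)‖ ≤
        c⁻¹ ^ 2 * ‖(t : ℂ) ^ (s - 1) • ((t : ℂ) + 1)⁻¹‖ := by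
    filter_upwards [ae_restrict_mem measurableSet_Ioi] with t (ht : 0 < t) w hw
    have h1 : ‖(t : ℂ) + 1‖ = 1 + t := by
      rw [← ofReal_one, ← ofReal_add, norm_real, Real.norm_of_nonneg (by positivity), add_comm]
    simp only [norm_smul, norm_div, norm_neg, norm_one, norm_pow, norm_inv, h1, one_div]
    rw [mul_left_comm]
    gcongr
    exact inv_sq_le_of_mul_one_add_le hc ht.le (hcw w hw t ht.le)
  have h_deriv : ∀ᵐ t : ℝ ∂(volume.restrict (Ioi (0 : ℝ))), ∀ w ∈ ball z ε,
      HasDerivAt (fun w => (t : ℂ) ^ (s - 1) • ((t : ℂ) + w)⁻¹)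
        ((t : ℂ) ^ (s - 1) • (-1 / ((t : ℂ) + w) ^ 2)) w := by
    filter_upwards [ae_restrict_mem measurableSet_Ioi] with t (ht : 0 < t) w hw
    exact (((hasDerivAt_id' w).const_add (t : ℂ)).inv (hne w hw t ht.le)).const_smul
      ((t : ℂ) ^ (s - 1))
  exact (hasDerivAt_integral_of_dominated_loc_of_deriv_le (ball_mem_nhds z hε) h_meas
    (mellinConvergent_ofReal_add_inv hz hs0 hs1) h_meas' h_bound
    ((mellinConvergent_ofReal_add_inv one_mem_slitPlane hs0 hs1).norm.const_mul _)
    h_deriv).2.differentiableAt.differentiableWithinAt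

lemma mem_slitPlane_of_forall_nonpos_ne {z : ℂ} (hz : ∀ x : ℝ, x ≤ 0 → z ≠ x) :
    z ∈ slitPlane :=
  mem_slitPlane_iff_not_le_zero.2 fun h =>
    hz z.re (le_def.1 h).1 (ext rfl (by simpa using (le_def.1 h).2))

lemma eqOn_slitPlane_of_eq_ofReal {E : Type*} [NormedAddCommGroup E] [NormedSpace ℂ E]
    [CompleteSpace E] {f g : ℂ → E} (hf : DifferentiableOn ℂ f slitPlane)
    (hg : DifferentiableOn ℂ g slitPlane) (hfg : ∀ x : ℝ, 0 < x → f x = g x) :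
    EqOn f g slitPlane := by
  have h_ofReal : Tendsto ((↑) : ℝ → ℂ) (𝓝[≠] 1) (𝓝[≠] 1) :=
    tendsto_nhdsWithin_iff.2
      ⟨(continuous_ofReal.tendsto' 1 1 ofReal_one).mono_left nhdsWithin_le_nhds,
        eventually_nhdsWithin_of_forall fun x hx => by simpa using hx⟩
  have h_conn : IsPreconnected slitPlane :=
    (starConvex_one_slitPlane.isPathConnected one_mem_slitPlane).isConnected.isPreconnected
  refine (hf.analyticOnNhd isOpen_slitPlane).eqOn_of_preconnected_of_frequently_eq
    (hg.analyticOnNhd isOpen_slitPlane) h_conn one_mem_slitPlane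
    (h_ofReal.frequently (Eventually.frequently ?_))
  filter_upwards [nhdsWithin_le_nhds (lt_mem_nhds one_pos)] with x hx using hfg x hx

lemma mellin_ofReal_add_inv {z : ℂ} (hz : z ∈ slitPlane) {s : ℂ} (hs0 : 0 < s.re)
    (hs1 : s.re < 1) : mellin (fun t : ℝ => ((t : ℂ) + z)⁻¹) s = π / sin (π * s) * z ^ (s - 1) := by
  refine eqOn_slitPlane_of_eq_ofReal (g := fun w => π / sin (π * s) * w ^ (s - 1))
    (differentiableOn_mellin_ofReal_add_inv hs0 hs1)
    ((differentiableOn_id.cpow_const fun w hw => hw).const_mul _) (fun x hx => ?_) hz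
  rw [mellin_ofReal_add_inv_of_pos hx, mellin_ofReal_add_one_inv hs0 hs1, mul_comm]

lemma hasDerivAt_pi_div_sin_mul_cpow {z : ℂ} (hz : z ≠ 0) {s : ℂ} (hs : sin (π * s) ≠ 0) :
    HasDerivAt (fun s => π / sin (π * s) * z ^ (s - 1))
      (π / sin (π * s) * z ^ (s - 1) * (log z - π * (cos (π * s) / sin (π * s)))) s := by
  have h_sin : HasDerivAt (fun s => sin (π * s)) (cos (π * s) * π) s := by
    simpa using ((hasDerivAt_id s).const_mul (π : ℂ)).csin
  have h_cpow : HasDerivAt (fun s => z ^ (s - 1)) (z ^ (s - 1) * log z * 1) s :=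
    ((hasDerivAt_id s).sub_const 1).const_cpow (Or.inl hz)
  refine (((hasDerivAt_const s (π : ℂ)).div h_sin hs).mul h_cpow).congr_deriv ?_
  simp only [Pi.div_apply]
  field_simp
  ring

/-- For `α ∈ (0,1)` and `z ∉ (−∞,0]`:
`∫₀^∞ y^(α−1) log y/(y+z) dy = (π/sin(απ)) z^(α−1) (log z − π cot(απ))`. -/
theorem stmt4 (α : ℝ) (hα : α ∈ Set.Ioo (0:ℝ) 1) (z : ℂ)
    (hz : ∀ x : ℝ, x ≤ 0 → z ≠ (x : ℂ)) :
    ∫ y in Set.Ioi (0:ℝ), (y : ℂ) ^ ((α : ℂ) - 1) * ((Real.log y : ℝ) : ℂ) / ((y : ℂ) + z)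
      = ((Real.pi / Real.sin (α * Real.pi) : ℝ) : ℂ) * z ^ ((α : ℂ) - 1) *
          (Complex.log z -
            (Real.pi : ℂ) * ((Real.cos (α * Real.pi) / Real.sin (α * Real.pi) : ℝ) : ℂ)) := by
  have hz_slit := mem_slitPlane_of_forall_nonpos_ne hz
  have hsin : sin (π * α) ≠ 0 := by
    rw [← ofReal_mul, ← ofReal_sin, ofReal_ne_zero]
    exact (Real.sin_pos_of_pos_of_lt_pi (by nlinarith [hα.1, Real.pi_pos])
      (by nlinarith [hα.2, Real.pi_pos])).ne'
  have h_mellin : mellin (fun t : ℝ => ((t : ℂ) + z)⁻¹) =ᶠ[𝓝 (α : ℂ)]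
      fun s => π / sin (π * s) * z ^ (s - 1) := by
    filter_upwards [(isOpen_Ioo.preimage continuous_re).mem_nhds (by simpa using hα)]
      with s hs using mellin_ofReal_add_inv hz_slit hs.1 hs.2
  have h_deriv := (mellin_hasDerivAt_of_isBigO_rpow (s := α)
    (locallyIntegrableOn_ofReal_add_inv hz_slit)
    (isBigO_ofReal_add_inv_atTop hz_slit) (by simpa using hα.2)
    (isBigO_ofReal_add_inv_nhdsGT_zero hz_slit) (by simpa using hα.1)).2
  have h_log := h_deriv.unique <|
    (hasDerivAt_pi_div_sin_mul_cpow (slitPlane_ne_zero hz_slit) hsin).congr_of_eventuallyEq h_mellin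
  simp only [mellin, real_smul, smul_eq_mul] at h_log
  calc _ = ∫ t in Ioi (0 : ℝ),
          (t : ℂ) ^ ((α : ℂ) - 1) * ((Real.log t : ℂ) * ((t : ℂ) + z)⁻¹) := by
        simp only [div_eq_mul_inv, mul_assoc]
    _ = _ := by rw [h_log]; push_cast; ring_nf
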